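/- Consider the noisy voter model corresponding to continuous-time random walk with parameter 1 on the n-star, with n even and n ≥ 4. Let η0 be any configuration in {0,1}^{S} which equals 1 on exactly n/2 of the leaves. If t = (1/4)·(log n − C) > 0 for a real number C, then ‖μ^{η0}_t − μ_∞‖_TV ≥ e^C / (48 + e^C). -/

import Mathlib

open scoped BigOperators

/-- The generator of a spin system on `{0,1}^V` given flip rates `r η x`. -/
noncomputable def genOfRate {V : Type} [Fintype V] [DecidableEq V]
    (r : (V → Bool) → V → ℝ) : Matrix (V → Bool) (V → Bool) ℝ :=
  fun η ξ =>
    (∑ x, if ξ = Function.update η x (!η x) then r η x else 0)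
      - (if ξ = η then ∑ x, r η x else 0)

/-- Flip rate of the noisy voter model with voting rates `q`. -/
noncomputable def voterRate {V : Type} [Fintype V] [DecidableEq V]
    (q : V → V → ℝ) (η : V → Bool) (x : V) : ℝ :=
  1 / 2 + ∑ y ∈ Finset.univ.filter (fun y => y ≠ x), q x y * (if η y ≠ η x then 1 else 0)

/-- Generator of the noisy voter model. -/
noncomputable def voterGen {V : Type} [Fintype V] [DecidableEq V]
    (q : V → V → ℝ) : Matrix (V → Bool) (V → Bool) ℝ :=
  genOfRate (voterRate q)

/-- Transition semigroup `P^t = exp (t Q)` of the noisy voter model. -/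
noncomputable def voterP {V : Type} [Fintype V] [DecidableEq V]
    (q : V → V → ℝ) (t : ℝ) : Matrix (V → Bool) (V → Bool) ℝ :=
  NormedSpace.exp (t • voterGen q)

/-- Total variation distance between two vectors on a finite set. -/
noncomputable def tvDist {Ω : Type} [Fintype Ω] (m1 m2 : Ω → ℝ) : ℝ :=
  (1 / 2) * ∑ s, |m1 s - m2 s|

/-- `π` is a stationary distribution for the continuous-time Markov chain `(S, q)`. -/
def IsStationaryChain {V : Type} [Fintype V] [DecidableEq V]
    (q : V → V → ℝ) (π : V → ℝ) : Prop :=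
  (∀ x, 0 ≤ π x) ∧ (∑ x, π x = 1) ∧
    ∀ y, ∑ x ∈ Finset.univ.filter (fun x => x ≠ y), π x * q x y
        = π y * ∑ z ∈ Finset.univ.filter (fun z => z ≠ y), q y z

/-- `μ` is a stationary distribution for the noisy voter model with rates `q`. -/
def IsStationaryNVM {V : Type} [Fintype V] [DecidableEq V]
    (q : V → V → ℝ) (μ : (V → Bool) → ℝ) : Prop :=
  (∀ η, 0 ≤ μ η) ∧ (∑ η, μ η = 1) ∧ ∀ ξ, ∑ η, μ η * voterGen q η ξ = 0

/-- Voting rates of continuous-time random walk with parameter 1 on the `n`-star: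
`none` is the center vertex and `some i` (for `i : Fin n`) are the leaves. A leaf jumps to the
center at rate 1, and the center jumps to a uniformly chosen leaf at rate 1. -/
noncomputable def starQ (n : ℕ) : Option (Fin n) → Option (Fin n) → ℝ :=
  fun x y => match x, y with
    | some _, none => 1
    | none, some _ => 1 / (n : ℝ)
    | _, _ => 0

/-!
Wilson's method. Let `σᵢ = ±1` be the spin at leaf `i`, `eᵢ` its initial value and `U = ∑ σᵢ`.
Since `∑ eᵢ = 0`, the overlap `Z = ∑ eᵢ σᵢ` is an eigenfunction of the generator with eigenvalue
`-2`, and `Z² + (U² - n)/(n - 1) - n` is one with eigenvalue `-4`. So at time `t` the mean of `Z`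
is `a = e^{-2t} n` under `μ_t` and `0` under `μ_∞`, while each second moment exceeds the squared
mean by at most `3n/2`. Cauchy–Schwarz against `|μ_t - μ_∞|` then gives
`‖μ_t - μ_∞‖_TV ≥ a² / (a² + 6n)`, and `a² = e^{-4t} n² = e^C n`.
-/

open NormedSpace Matrix
open scoped Nat

namespace Matrix

variable {m : Type*} [Fintype m] [DecidableEq m]

theorem hasSum_exp (A : Matrix m m ℝ) :
    HasSum (fun k : ℕ => (k !⁻¹ : ℝ) • A ^ k) (exp A) := by
  let _ : NormedRing (Matrix m m ℝ) := Matrix.linftyOpNormedRing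
  let _ : NormedAlgebra ℝ (Matrix m m ℝ) := Matrix.linftyOpNormedAlgebra
  exact exp_series_hasSum_exp' A

theorem exp_mulVec_of_mulVec_eq_smul {A : Matrix m m ℝ} {v : m → ℝ} {c : ℝ}
    (h : A *ᵥ v = c • v) : exp A *ᵥ v = Real.exp c • v := by
  have hpow (k : ℕ) : A ^ k *ᵥ v = c ^ k • v := by
    induction k with
    | zero => simp
    | succ k ih => rw [pow_succ', ← mulVec_mulVec, ih, mulVec_smul, h, smul_smul, pow_succ]
  have hA := (hasSum_exp A).map (mulVec.addMonoidHomLeft v)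
    (continuous_id.matrix_mulVec continuous_const)
  have hc : HasSum (fun k : ℕ => ((k ! : ℝ)⁻¹ * c ^ k) • v) (Real.exp c • v) := by
    rw [Real.exp_eq_exp_ℝ]
    exact ((exp_series_hasSum_exp' (𝕂 := ℝ) c).smul_const v).congr_fun fun k => by
      simp [smul_eq_mul]
  refine hA.unique (hc.congr_fun fun k => ?_)
  simp [mulVec.addMonoidHomLeft, smul_mulVec, hpow, smul_smul]

theorem exp_apply_nonneg_of_nonneg {B : Matrix m m ℝ} (hB : ∀ i j, 0 ≤ B i j) (i j : m) :
    0 ≤ exp B i j := by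
  have hpow (k : ℕ) : ∀ i j, 0 ≤ (B ^ k) i j := by
    induction k with
    | zero => intro i j; by_cases h : i = j <;> simp [h]
    | succ k ih =>
      intro i j
      rw [pow_succ, mul_apply]
      exact Finset.sum_nonneg fun l _ => mul_nonneg (ih i l) (hB l j)
  refine (Pi.hasSum.1 (Pi.hasSum.1 (hasSum_exp B) i) j).nonneg fun k => ?_
  simpa using mul_nonneg (by positivity : (0 : ℝ) ≤ (k ! : ℝ)⁻¹) (hpow k i j)

theorem exp_apply_nonneg {A : Matrix m m ℝ} (hA : ∀ i j, i ≠ j → 0 ≤ A i j) (i j : m) :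
    0 ≤ exp A i j := by
  set c : ℝ := ∑ k, |A k k|
  have hB : ∀ i j, 0 ≤ (A + c • 1) i j := by
    intro i j
    rcases eq_or_ne i j with rfl | hij
    · have : |A i i| ≤ c :=
        Finset.single_le_sum (f := fun k => |A k k|) (fun _ _ => abs_nonneg _) (Finset.mem_univ i)
      simpa using by linarith [neg_abs_le (A i i)]
    · simpa [one_apply_ne hij] using hA i j hij
  have hsplit : exp A = exp (A + c • 1) * diagonal fun _ => exp (-c) := by
    have hcomm : Commute (A + c • 1) ((-c) • 1) := (Commute.one_right _).smul_right _
    calc exp A = exp ((A + c • 1) + (-c) • 1) := by congr 1; module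
      _ = _ := by
        rw [exp_add_of_commute _ _ hcomm, smul_one_eq_diagonal (-c), exp_diagonal, Pi.exp_def]
  rw [hsplit, mul_diagonal]
  exact mul_nonneg (exp_apply_nonneg_of_nonneg hB i j) (by rw [← Real.exp_eq_exp_ℝ]; positivity)

end Matrix

section Generator

variable {V : Type} [Fintype V] [DecidableEq V]

theorem genOfRate_mulVec (r : (V → Bool) → V → ℝ) (f : (V → Bool) → ℝ) (η : V → Bool) :
    (genOfRate r *ᵥ f) η = ∑ x, r η x * (f (Function.update η x (!η x)) - f η) := by
  simp only [mulVec, dotProduct, genOfRate, sub_mul, Finset.sum_sub_distrib, Finset.sum_mul,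
    ite_mul, zero_mul, mul_sub]
  rw [Finset.sum_comm]
  simp

theorem genOfRate_mulVec_const (r : (V → Bool) → V → ℝ) (a : ℝ) :
    genOfRate r *ᵥ (fun _ => a) = 0 := by
  ext η
  simp [genOfRate_mulVec]

theorem genOfRate_apply_nonneg {r : (V → Bool) → V → ℝ} (hr : ∀ η x, 0 ≤ r η x)
    {η ξ : V → Bool} (h : η ≠ ξ) : 0 ≤ genOfRate r η ξ := by
  rw [genOfRate, if_neg h.symm, sub_zero]
  exact Finset.sum_nonneg fun x _ => by split <;> simp [hr]

theorem voterRate_nonneg {q : V → V → ℝ} (hq : ∀ x y, 0 ≤ q x y) (η : V → Bool) (x : V) :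
    0 ≤ voterRate q η x :=
  add_nonneg (by norm_num)
    (Finset.sum_nonneg fun y _ => mul_nonneg (hq x y) (by split <;> norm_num))

theorem voterP_apply_nonneg {q : V → V → ℝ} (hq : ∀ x y, 0 ≤ q x y) {t : ℝ} (ht : 0 ≤ t)
    (η ξ : V → Bool) : 0 ≤ voterP q t η ξ :=
  exp_apply_nonneg
    (fun _ _ h => mul_nonneg ht (genOfRate_apply_nonneg (voterRate_nonneg hq) h)) η ξ

theorem voterP_dotProduct_of_mulVec_eq_smul {q : V → V → ℝ} {f : (V → Bool) → ℝ} {c : ℝ}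
    (h : voterGen q *ᵥ f = c • f) (t : ℝ) (η : V → Bool) :
    voterP q t η ⬝ᵥ f = Real.exp (t * c) * f η :=
  congrFun (exp_mulVec_of_mulVec_eq_smul (by rw [smul_mulVec, h, smul_smul])) η

theorem sum_voterP_apply (q : V → V → ℝ) (t : ℝ) (η : V → Bool) : ∑ ξ, voterP q t η ξ = 1 := by
  simpa [dotProduct_one] using voterP_dotProduct_of_mulVec_eq_smul (q := q) (c := 0) (f := 1)
    (by rw [zero_smul]; exact genOfRate_mulVec_const _ 1) t η

theorem IsStationaryNVM.dotProduct_eq_zero_of_mulVec_eq_smul {q : V → V → ℝ}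
    {μ : (V → Bool) → ℝ} (hμ : IsStationaryNVM q μ) {f : (V → Bool) → ℝ} {c : ℝ}
    (h : voterGen q *ᵥ f = c • f) (hc : c ≠ 0) : μ ⬝ᵥ f = 0 := by
  have hμQ : μ ᵥ* voterGen q = 0 := funext hμ.2.2
  have hfix := dotProduct_mulVec μ (voterGen q) f
  rw [hμQ, zero_dotProduct, h, dotProduct_smul, smul_eq_mul] at hfix
  exact (mul_eq_zero.1 hfix).resolve_left hc

end Generator

section TotalVariation

variable {Ω : Type} [Fintype Ω] {μ ν : Ω → ℝ}

theorem tvDist_nonneg (μ ν : Ω → ℝ) : 0 ≤ tvDist μ ν := by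
  unfold tvDist
  positivity

theorem dotProduct_le_dotProduct_add_of_le_add (hμ0 : ∀ s, 0 ≤ μ s) (hμ1 : ∑ s, μ s = 1)
    {f g : Ω → ℝ} {M : ℝ} (h : ∀ s, f s ≤ g s + M) : μ ⬝ᵥ f ≤ μ ⬝ᵥ g + M :=
  calc μ ⬝ᵥ f ≤ ∑ s, μ s * (g s + M) :=
        Finset.sum_le_sum fun s _ => mul_le_mul_of_nonneg_left (h s) (hμ0 s)
    _ = μ ⬝ᵥ g + M := by
        simp only [mul_add, Finset.sum_add_distrib, ← Finset.sum_mul, hμ1, one_mul, dotProduct]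

theorem sq_sub_dotProduct_le_two_mul_tvDist_mul (hμ0 : ∀ s, 0 ≤ μ s) (hν0 : ∀ s, 0 ≤ ν s)
    (hμ1 : ∑ s, μ s = 1) (hν1 : ∑ s, ν s = 1) (Z : Ω → ℝ) (c : ℝ) :
    (μ ⬝ᵥ Z - ν ⬝ᵥ Z) ^ 2 ≤ 2 * tvDist μ ν * ∑ s, (μ s + ν s) * (Z s - c) ^ 2 := by
  have hshift : μ ⬝ᵥ Z - ν ⬝ᵥ Z = ∑ s, (μ s - ν s) * (Z s - c) := by
    simp only [dotProduct, mul_sub, sub_mul, Finset.sum_sub_distrib, ← Finset.sum_mul, hμ1, hν1]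
    ring
  have htv : 2 * tvDist μ ν = ∑ s, |μ s - ν s| := by rw [tvDist]; ring
  rw [hshift, htv]
  refine Finset.sum_sq_le_sum_mul_sum_of_sq_le_mul _ (fun s _ => abs_nonneg _)
    (fun s _ => mul_nonneg (add_nonneg (hμ0 s) (hν0 s)) (sq_nonneg _)) fun s _ => ?_
  have habs : |μ s - ν s| ≤ μ s + ν s := abs_le.2 ⟨by linarith [hμ0 s], by linarith [hν0 s]⟩
  calc ((μ s - ν s) * (Z s - c)) ^ 2 = |μ s - ν s| * (|μ s - ν s| * (Z s - c) ^ 2) := by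
        rw [mul_pow, ← sq_abs (μ s - ν s)]; ring
    _ ≤ |μ s - ν s| * ((μ s + ν s) * (Z s - c) ^ 2) := by gcongr

theorem sq_le_tvDist_mul_of_moments (hμ0 : ∀ s, 0 ≤ μ s) (hν0 : ∀ s, 0 ≤ ν s)
    (hμ1 : ∑ s, μ s = 1) (hν1 : ∑ s, ν s = 1) {Z : Ω → ℝ} {a M : ℝ}
    (hμZ : μ ⬝ᵥ Z = a) (hνZ : ν ⬝ᵥ Z = 0) (hμZ2 : μ ⬝ᵥ Z ^ 2 ≤ a ^ 2 + M)
    (hνZ2 : ν ⬝ᵥ Z ^ 2 ≤ M) : a ^ 2 ≤ tvDist μ ν * (a ^ 2 + 4 * M) := by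
  have hspread :
      ∑ s, (μ s + ν s) * (Z s - a / 2) ^ 2 = μ ⬝ᵥ Z ^ 2 + ν ⬝ᵥ Z ^ 2 - a ^ 2 / 2 := by
    have hexpand : ∀ s, (μ s + ν s) * (Z s - a / 2) ^ 2 = μ s * Z s ^ 2 + ν s * Z s ^ 2
        - a * (μ s * Z s + ν s * Z s) + a ^ 2 / 4 * (μ s + ν s) := fun s => by ring
    simp only [hexpand, Finset.sum_add_distrib, Finset.sum_sub_distrib, ← Finset.mul_sum, hμ1, hν1]
    simp only [dotProduct, Pi.pow_apply] at hμZ hνZ ⊢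
    rw [hμZ, hνZ]
    ring
  have key := sq_sub_dotProduct_le_two_mul_tvDist_mul hμ0 hν0 hμ1 hν1 Z (a / 2)
  rw [hμZ, hνZ, hspread, sub_zero] at key
  nlinarith [tvDist_nonneg μ ν]

end TotalVariation

noncomputable def spin (b : Bool) : ℝ := if b then 1 else -1

@[simp] theorem spin_true : spin true = 1 := rfl

@[simp] theorem spin_false : spin false = -1 := rfl

theorem spin_sq (b : Bool) : spin b ^ 2 = 1 := by cases b <;> norm_num

theorem sum_spin {ι : Type} [Fintype ι] (b : ι → Bool) :
    ∑ i, spin (b i) = 2 * (Finset.univ.filter (fun i => b i = true)).card - Fintype.card ι := by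
  have hspin : ∀ i, spin (b i) = 2 * (if b i = true then 1 else 0) - 1 := fun i => by
    cases b i <;> norm_num
  simp only [hspin, Finset.sum_sub_distrib, ← Finset.mul_sum, Finset.sum_boole, Finset.sum_const,
    Finset.card_univ, nsmul_eq_mul, mul_one]

section Star

variable {n : ℕ}

noncomputable def leafOverlap (e : Fin n → ℝ) (η : Option (Fin n) → Bool) : ℝ :=
  ∑ i, e i * spin (η (some i))

/-- `leafOverlap 1 η ^ 2 - n` is the pair sum `∑_{i ≠ j} σᵢ σⱼ`; adding it with weight `1/(n-1)`
cancels the center-dependent part of the drift of `leafOverlap e ^ 2`. -/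
noncomputable def leafQuadratic (e : Fin n → ℝ) (η : Option (Fin n) → Bool) : ℝ :=
  leafOverlap e η ^ 2 + (leafOverlap 1 η ^ 2 - n) / (n - 1) - n

theorem starQ_nonneg (x y : Option (Fin n)) : 0 ≤ starQ n x y := by
  cases x <;> cases y <;> simp only [starQ] <;> positivity

theorem voterRate_starQ_some (η : Option (Fin n) → Bool) (i : Fin n) :
    voterRate (starQ n) η (some i) = 1 - spin (η (some i)) * spin (η none) / 2 := by
  rw [voterRate, Finset.sum_eq_single_of_mem none (by simp)]
  · cases η none <;> cases η (some i) <;> norm_num [starQ]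
  · rintro (_ | j) _ hj
    · exact absurd rfl hj
    · simp [starQ]

theorem voterGen_starQ_mulVec_apply {F : (Option (Fin n) → Bool) → ℝ}
    (hF : ∀ η b, F (Function.update η none b) = F η) (η : Option (Fin n) → Bool) :
    (voterGen (starQ n) *ᵥ F) η = ∑ i, (1 - spin (η (some i)) * spin (η none) / 2)
      * (F (Function.update η (some i) (!η (some i))) - F η) := by
  simp only [voterGen, genOfRate_mulVec, Fintype.sum_option, hF, sub_self, mul_zero, zero_add,
    voterRate_starQ_some]

theorem leafOverlap_update_none (e : Fin n → ℝ) (η : Option (Fin n) → Bool) (b : Bool) :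
    leafOverlap e (Function.update η none b) = leafOverlap e η := by
  simp [leafOverlap]

theorem leafOverlap_update_some_not (e : Fin n → ℝ) (η : Option (Fin n) → Bool) (i : Fin n) :
    leafOverlap e (Function.update η (some i) (!η (some i)))
      = leafOverlap e η - 2 * (e i * spin (η (some i))) := by
  have hflip : ∀ j, e j * spin (Function.update η (some i) (!η (some i)) (some j))
      = e j * spin (η (some j)) - if j = i then 2 * (e i * spin (η (some i))) else 0 := by
    intro j
    rcases eq_or_ne j i with rfl | hji
    · cases η (some j) <;> simp <;> ring
    · simp [hji]
  simp only [leafOverlap, hflip, Finset.sum_sub_distrib, Finset.sum_ite_eq', Finset.mem_univ,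
    if_true]

theorem leafOverlap_self (η : Option (Fin n) → Bool) :
    leafOverlap (fun i => spin (η (some i))) η = n := by
  simp [leafOverlap, ← sq, spin_sq]

theorem voterGen_starQ_mulVec_leafOverlap {e : Fin n → ℝ} (hsum : ∑ i, e i = 0) :
    voterGen (starQ n) *ᵥ leafOverlap e = (-2 : ℝ) • leafOverlap e := by
  funext η
  rw [voterGen_starQ_mulVec_apply (leafOverlap_update_none e)]
  have hleaf : ∀ i, (1 - spin (η (some i)) * spin (η none) / 2)
      * (leafOverlap e (Function.update η (some i) (!η (some i))) - leafOverlap e η)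
      = -2 * (e i * spin (η (some i))) + spin (η none) * e i := by
    intro i
    rw [leafOverlap_update_some_not]
    cases η (some i) <;> simp <;> ring
  simp only [hleaf]
  simp only [Finset.sum_add_distrib, ← Finset.mul_sum, hsum, mul_zero, add_zero, leafOverlap,
    Pi.smul_apply, smul_eq_mul]

theorem voterGen_starQ_mulVec_leafOverlap_sq (e : Fin n → ℝ) :
    voterGen (starQ n) *ᵥ leafOverlap e ^ 2
      = fun η => -4 * leafOverlap e η ^ 2 + 4 * ∑ i, e i ^ 2
          + 2 * spin (η none) * (leafOverlap e η * ∑ i, e i - leafOverlap (e ^ 2) η) := by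
  funext η
  rw [voterGen_starQ_mulVec_apply fun η b => by
    simp only [Pi.pow_apply, leafOverlap_update_none]]
  have hleaf : ∀ i, (1 - spin (η (some i)) * spin (η none) / 2)
      * ((leafOverlap e ^ 2) (Function.update η (some i) (!η (some i))) - (leafOverlap e ^ 2) η)
      = -4 * leafOverlap e η * (e i * spin (η (some i))) + 4 * e i ^ 2
        + 2 * spin (η none) * leafOverlap e η * e i
        - 2 * spin (η none) * (e i ^ 2 * spin (η (some i))) := by
    intro i
    rw [Pi.pow_apply, Pi.pow_apply, leafOverlap_update_some_not]
    cases η (some i) <;> simp <;> ring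
  simp only [hleaf]
  simp only [Finset.sum_add_distrib, Finset.sum_sub_distrib, ← Finset.mul_sum, leafOverlap,
    Pi.pow_apply]
  ring

theorem voterGen_starQ_mulVec_leafQuadratic {e : Fin n → ℝ} (he : ∀ i, e i ^ 2 = 1)
    (hsum : ∑ i, e i = 0) (hn : 1 < n) :
    voterGen (starQ n) *ᵥ leafQuadratic e = (-4 : ℝ) • leafQuadratic e := by
  have hn1 : (n : ℝ) - 1 ≠ 0 := sub_ne_zero.2 (by exact_mod_cast hn.ne')
  have hsq : e ^ 2 = 1 := funext he
  have hW : leafQuadratic e = leafOverlap e ^ 2 + ((n : ℝ) - 1)⁻¹ • leafOverlap 1 ^ 2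
      + fun _ => -((n : ℝ) / (n - 1)) - n := by
    funext η
    simp only [leafQuadratic, Pi.add_apply, Pi.smul_apply, Pi.pow_apply, smul_eq_mul]
    field_simp
    ring
  rw [hW, mulVec_add, mulVec_add, mulVec_smul, voterGen_starQ_mulVec_leafOverlap_sq,
    voterGen_starQ_mulVec_leafOverlap_sq, voterGen, genOfRate_mulVec_const]
  funext η
  simp [hsq, he, hsum]
  field_simp
  ring

theorem sq_leafOverlap_le (e : Fin n → ℝ) (hn : 3 ≤ n) (η : Option (Fin n) → Bool) :
    leafOverlap e η ^ 2 ≤ leafQuadratic e η + 3 * n / 2 := by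
  have hn3 : (3 : ℝ) ≤ n := by exact_mod_cast hn
  have hU : 0 ≤ leafOverlap 1 η ^ 2 / (n - 1) := div_nonneg (sq_nonneg _) (by linarith)
  have hfrac : (n : ℝ) / (n - 1) ≤ n / 2 :=
    div_le_div_of_nonneg_left (by positivity) two_pos (by linarith)
  rw [leafQuadratic, sub_div]
  linarith

theorem leafQuadratic_self_le {η : Option (Fin n) → Bool} (hbal : ∑ i, spin (η (some i)) = 0)
    (hn : 1 < n) : leafQuadratic (fun i => spin (η (some i))) η ≤ n ^ 2 := by
  have hn1 : (0 : ℝ) < n - 1 := sub_pos.2 (by exact_mod_cast hn)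
  have hU : leafOverlap 1 η = 0 := by simpa [leafOverlap] using hbal
  rw [leafQuadratic, leafOverlap_self, hU]
  have : 0 ≤ (n : ℝ) / (n - 1) := by positivity
  linarith [show ((0 : ℝ) ^ 2 - n) / (n - 1) = -(n / (n - 1)) by ring]

end Star

/-- **Theorem 2(i) of Cox–Peres–Steif.** For the noisy voter model on the `n`-star (`n` even),
started from a configuration which is 1 on exactly half of the leaves, at time
`t = (1/4)(log n − C) > 0` the total variation distance from stationarity is at least
`e^C / (48 + e^C)`. -/
theorem stmt_5 (n : ℕ) (hn : Even n) (hn4 : 4 ≤ n)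
    (η0 : Option (Fin n) → Bool)
    (hη0 : (Finset.univ.filter (fun i : Fin n => η0 (some i) = true)).card = n / 2)
    (μinf : (Option (Fin n) → Bool) → ℝ) (hμ : IsStationaryNVM (starQ n) μinf)
    (C : ℝ) (t : ℝ) (htdef : t = (1 / 4) * (Real.log n - C)) (ht : 0 < t) :
    Real.exp C / (48 + Real.exp C) ≤ tvDist (voterP (starQ n) t η0) μinf := by
  have hn0 : (0 : ℝ) < n := Nat.cast_pos.2 (by omega)
  set e : Fin n → ℝ := fun i => spin (η0 (some i))
  have hbal : ∑ i, e i = 0 := by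
    rw [sum_spin, hη0, Fintype.card_fin, Nat.cast_div_charZero (even_iff_two_dvd.1 hn)]
    ring
  have hZ := voterGen_starQ_mulVec_leafOverlap hbal
  have hW := voterGen_starQ_mulVec_leafQuadratic (fun i => spin_sq _) hbal (by omega)
  set μt := voterP (starQ n) t η0
  have hμ0 : ∀ s, 0 ≤ μt s := voterP_apply_nonneg starQ_nonneg ht.le η0
  have hμ1 : ∑ s, μt s = 1 := sum_voterP_apply (starQ n) t η0
  have hdecay : Real.exp (t * -4) * n ^ 2 = Real.exp C * n := by
    rw [htdef, show 1 / 4 * (Real.log n - C) * -4 = C - Real.log n by ring, Real.exp_sub,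
      Real.exp_log hn0]
    field_simp
  have ha : (Real.exp (t * -2) * n) ^ 2 = Real.exp (t * -4) * n ^ 2 := by
    rw [mul_pow, ← Real.exp_nat_mul]
    ring_nf
  have hmeanμ : μt ⬝ᵥ leafOverlap e = Real.exp (t * -2) * n := by
    rw [voterP_dotProduct_of_mulVec_eq_smul hZ, leafOverlap_self]
  have hmeanν : μinf ⬝ᵥ leafOverlap e = 0 :=
    hμ.dotProduct_eq_zero_of_mulVec_eq_smul hZ (by norm_num)
  have hsq := sq_leafOverlap_le e (by omega)
  have hsecondμ : μt ⬝ᵥ leafOverlap e ^ 2 ≤ (Real.exp (t * -2) * n) ^ 2 + 3 * n / 2 := by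
    refine (dotProduct_le_dotProduct_add_of_le_add hμ0 hμ1 hsq).trans ?_
    grw [voterP_dotProduct_of_mulVec_eq_smul hW, ha, leafQuadratic_self_le hbal (by omega)]
  have hsecondν : μinf ⬝ᵥ leafOverlap e ^ 2 ≤ 3 * n / 2 := by
    refine (dotProduct_le_dotProduct_add_of_le_add hμ.1 hμ.2.1 hsq).trans ?_
    rw [hμ.dotProduct_eq_zero_of_mulVec_eq_smul hW (by norm_num), zero_add]
  have key := sq_le_tvDist_mul_of_moments hμ0 hμ.1 hμ1 hμ.2.1 hmeanμ hmeanν hsecondμ hsecondν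
  rw [ha, hdecay] at key
  have hp : Real.exp C * n ≤ tvDist μt μinf * (Real.exp C + 6) * n := by linarith
  rw [div_le_iff₀ (by positivity)]
  nlinarith [le_of_mul_le_mul_right hp hn0, tvDist_nonneg μt μinf]
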